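/- Let $n,k$ be positive integers and $a=\lceil n/(k+1)\rceil$. Then $\operatorname{sdepth}(\mathbf{m}^k)\le a$, where $\mathbf{m}=(x_1,\ldots,x_n)\subset S=K[x_1,\ldots,x_n]$. In particular, if $k\ge n-1$ then $\operatorname{sdepth}(\mathbf{m}^k)=1$. -/

import Mathlib

open MvPolynomial

/-- A `ℤⁿ`-multigrading (by `K`-subspaces) on a module `M` over the polynomial
ring `S = K[x₁,…,xₙ]`: a direct sum decomposition of `M` into `K`-subspaces indexed
by `ℤⁿ`, such that multiplication by a monomial of exponent `c` maps the component
of degree `a` into the component of degree `a + c`. -/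
structure MultiGrading (K : Type*) [Field K] (n : ℕ) (M : Type*) [AddCommGroup M]
    [Module K M] [Module (MvPolynomial (Fin n) K) M]
    [IsScalarTower K (MvPolynomial (Fin n) K) M] where
  deg : (Fin n → ℤ) → Submodule K M
  isInternal : DirectSum.IsInternal deg
  monomial_smul_mem : ∀ (c : Fin n →₀ ℕ) (a : Fin n → ℤ) (m : M),
    m ∈ deg a → (monomial c (1 : K)) • m ∈ deg (a + fun i => (c i : ℤ))

variable {K : Type*} [Field K] {n : ℕ} {M : Type*} [AddCommGroup M]
  [Module K M] [Module (MvPolynomial (Fin n) K) M]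
  [IsScalarTower K (MvPolynomial (Fin n) K) M]

/-- The `K`-subspace `m·K[Z]` of `M`, for `m : M` and a set of variables `Z`:
the image of the polynomials supported on `Z` under `p ↦ p • m`. -/
noncomputable def stanleySpace (m : M) (Z : Finset (Fin n)) : Submodule K M :=
  Submodule.map ((LinearMap.toSpanSingleton (MvPolynomial (Fin n) K) M m).restrictScalars K)
    (Subalgebra.toSubmodule (MvPolynomial.supported K (↑Z : Set (Fin n))))

/-- A Stanley decomposition of a multigraded module `M`: a finite family of
homogeneous elements `mᵢ` and sets of variables `Zᵢ` such that each `mᵢ·K[Zᵢ]` is a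
free `K[Zᵢ]`-module and `M = ⊕ᵢ mᵢ·K[Zᵢ]` as a `K`-vector space. -/
structure StanleyDecomposition (g : MultiGrading K n M) where
  r : ℕ
  elt : Fin r → M
  Z : Fin r → Finset (Fin n)
  homogeneous : ∀ i, ∃ a, elt i ∈ g.deg a
  free : ∀ i, ∀ p ∈ MvPolynomial.supported K (↑(Z i) : Set (Fin n)), p • elt i = 0 → p = 0
  isInternal : DirectSum.IsInternal fun i => stanleySpace (K := K) (elt i) (Z i)

/-- The Stanley depth of a Stanley decomposition: the minimum of the `|Zᵢ|`. -/
noncomputable def StanleyDecomposition.sdepth {g : MultiGrading K n M}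
    (D : StanleyDecomposition g) : ℕ∞ :=
  ⨅ i, ((D.Z i).card : ℕ∞)

/-- The Stanley depth of a multigraded module: the supremum of the Stanley depths
of its Stanley decompositions. -/
noncomputable def stanleyDepth (g : MultiGrading K n M) : ℕ∞ :=
  ⨆ D : StanleyDecomposition g, D.sdepth

/-- The maximal irrelevant ideal `𝔪 = (x₁,…,xₙ)` of `S = K[x₁,…,xₙ]`. -/
noncomputable def maxIdeal (K : Type*) [Field K] (n : ℕ) : Ideal (MvPolynomial (Fin n) K) :=
  Ideal.span (Set.range X)

/-!
A homogeneous element of `𝔪^k` is a scalar multiple of a monomial, so a Stanley decomposition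
`⊕ᵢ mᵢ K[Zᵢ]` of `𝔪^k` amounts to a partition of the exponents of degree `≥ k` into cones
`cᵢ + ℕ^{Zᵢ}`. Every exponent `a` of degree `k` is then itself an apex `cᵢ`, and the exponents
`a + e_j`, `j ∈ Zᵢ`, are pairwise distinct of degree `k + 1` and lie in pairwise distinct cones.
Hence `d · #{deg = k} ≤ #{deg = k + 1}` for `d = minᵢ |Zᵢ|`, and
`(k + 1) · C(n + k, k + 1) = (n + k) · C(n + k - 1, k)` gives `d (k + 1) ≤ n + k`.
For the lower bound `1`, the exponents of degree `≥ k` are partitioned by the cones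
`a + ℕ^{{t | t ≥ max (supp a)}}` with `|a| = k`.
-/

open Finset Function

local notation "S" => MvPolynomial (Fin n) K

/-- The exponents of the monomials of `X^a · K[Z]`. -/
def stanleyCone {σ : Type*} (a : σ →₀ ℕ) (Z : Finset σ) : Set (σ →₀ ℕ) :=
  {b | ∃ e : σ →₀ ℕ, e.support ⊆ Z ∧ b = a + e}

section StanleyCone

variable {σ : Type*} {a b : σ →₀ ℕ} {Z : Finset σ}

theorem le_of_mem_stanleyCone (h : b ∈ stanleyCone a Z) : a ≤ b := by
  obtain ⟨e, -, rfl⟩ := h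
  exact le_self_add

theorem eq_of_mem_stanleyCone_of_degree_le (h : b ∈ stanleyCone a Z)
    (hb : b.degree ≤ a.degree) : b = a := by
  obtain ⟨e, -, rfl⟩ := h
  rw [map_add] at hb
  rw [(Finsupp.degree_eq_zero_iff e).1 (by omega), add_zero]

theorem add_single_mem_stanleyCone [DecidableEq σ] {j : σ} (hj : j ∈ Z) :
    a + Finsupp.single j 1 ∈ stanleyCone a Z :=
  ⟨_, Finsupp.support_single_subset.trans (singleton_subset_iff.2 hj), rfl⟩

end StanleyCone

section Counting

variable {σ : Type*} [Fintype σ] [DecidableEq σ]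

theorem mem_finsuppAntidiag_univ {f : σ →₀ ℕ} {k : ℕ} :
    f ∈ (univ : Finset σ).finsuppAntidiag k ↔ f.degree = k := by
  simp [Finsupp.degree_eq_sum]

theorem succ_mul_card_finsuppAntidiag_succ (k : ℕ) :
    (k + 1) * #((univ : Finset σ).finsuppAntidiag (k + 1)) =
      (Fintype.card σ + k) * #((univ : Finset σ).finsuppAntidiag k) := by
  simp only [card_finsuppAntidiag_nat_eq_choose, card_univ]
  cases Fintype.card σ with
  | zero => cases k <;> simp
  | succ m =>
    rw [show m + 1 + (k + 1) - 1 = m + k + 1 by omega, show m + 1 + k - 1 = m + k by omega,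
      show m + 1 + k = m + k + 1 by omega, Nat.add_one_mul_choose_eq, mul_comm]

variable {ι : Type*} [Fintype ι] {c : ι → σ →₀ ℕ} {Z : ι → Finset σ} {k : ℕ}

theorem sum_card_le_card_finsuppAntidiag_succ
    (hdisj : Pairwise (Disjoint on fun i => stanleyCone (c i) (Z i))) :
    ∑ i with (c i).degree = k, #(Z i) ≤ #((univ : Finset σ).finsuppAntidiag (k + 1)) := by
  let shift (i : ι) : Finset (σ →₀ ℕ) := (Z i).image fun j => c i + Finsupp.single j 1
  have hshift : ∀ i, #(shift i) = #(Z i) := fun i =>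
    card_image_of_injective _ fun j j' h => Finsupp.single_left_injective one_ne_zero
      (add_left_cancel h)
  calc ∑ i with (c i).degree = k, #(Z i)
      = #((univ.filter fun i => (c i).degree = k).biUnion shift) := by
        rw [card_biUnion]
        · exact sum_congr rfl fun i _ => (hshift i).symm
        · intro i _ i' _ hii'
          refine disjoint_left.2 fun b hb hb' => ?_
          obtain ⟨j, hj, rfl⟩ := mem_image.1 hb
          obtain ⟨j', hj', hjj'⟩ := mem_image.1 hb'
          exact Set.disjoint_left.1 (hdisj hii') (add_single_mem_stanleyCone hj)
            (hjj' ▸ add_single_mem_stanleyCone hj')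
    _ ≤ _ := by
        refine card_le_card fun b hb => ?_
        obtain ⟨i, hi, hb⟩ := mem_biUnion.1 hb
        obtain ⟨j, -, rfl⟩ := mem_image.1 hb
        rw [mem_finsuppAntidiag_univ, map_add, Finsupp.degree_single, (mem_filter.1 hi).2]

theorem finsuppAntidiag_subset_image_of_stanleyCone_cover (hc : ∀ i, k ≤ (c i).degree)
    (hcover : ∀ b : σ →₀ ℕ, k ≤ b.degree → ∃ i, b ∈ stanleyCone (c i) (Z i)) :
    (univ : Finset σ).finsuppAntidiag k ⊆ image c {i | (c i).degree = k} := by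
  intro a ha
  rw [mem_finsuppAntidiag_univ] at ha
  obtain ⟨i, hi⟩ := hcover a ha.ge
  have hia : a = c i := eq_of_mem_stanleyCone_of_degree_le hi (ha ▸ hc i)
  exact mem_image.2 ⟨i, mem_filter.2 ⟨mem_univ i, hia ▸ ha⟩, hia.symm⟩

theorem exists_card_mul_le_of_stanleyCone_cover [Nonempty σ] (hc : ∀ i, k ≤ (c i).degree)
    (hdisj : Pairwise (Disjoint on fun i => stanleyCone (c i) (Z i)))
    (hcover : ∀ b : σ →₀ ℕ, k ≤ b.degree → ∃ i, b ∈ stanleyCone (c i) (Z i)) :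
    ∃ i, #(Z i) * (k + 1) ≤ Fintype.card σ + k := by
  set T := univ.filter fun i => (c i).degree = k
  have hA := finsuppAntidiag_subset_image_of_stanleyCone_cover hc hcover
  have hT : T.Nonempty := by
    obtain ⟨j⟩ := ‹Nonempty σ›
    obtain ⟨i, hi, -⟩ := mem_image.1 (hA (mem_finsuppAntidiag_univ.2 (Finsupp.degree_single j k)))
    exact ⟨i, hi⟩
  obtain ⟨i, -, hi⟩ := exists_le_of_sum_le (f := fun i => #(Z i) * (k + 1))
    (g := fun _ => Fintype.card σ + k) hT <| calc
      ∑ i ∈ T, #(Z i) * (k + 1) ≤ #((univ : Finset σ).finsuppAntidiag (k + 1)) * (k + 1) := by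
        rw [← sum_mul]
        exact Nat.mul_le_mul_right _ (sum_card_le_card_finsuppAntidiag_succ hdisj)
      _ = (Fintype.card σ + k) * #((univ : Finset σ).finsuppAntidiag k) := by
        rw [mul_comm, succ_mul_card_finsuppAntidiag_succ]
      _ ≤ (Fintype.card σ + k) * #T := Nat.mul_le_mul_left _ ((card_le_card hA).trans card_image_le)
      _ = ∑ i ∈ T, (Fintype.card σ + k) := by rw [sum_const, smul_eq_mul, mul_comm]
  exact ⟨i, hi⟩

end Counting

section TailVars

variable {σ : Type*} [Fintype σ] [LinearOrder σ]

def tailVars (a : σ →₀ ℕ) : Finset σ :=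
  univ.filter fun t => ∀ s ∈ a.support, s ≤ t

theorem mem_tailVars {a : σ →₀ ℕ} {t : σ} : t ∈ tailVars a ↔ ∀ s ∈ a.support, s ≤ t := by
  simp [tailVars]

theorem tailVars_nonempty [Nonempty σ] (a : σ →₀ ℕ) : (tailVars a).Nonempty := by
  obtain ⟨t, ht⟩ := Finite.exists_max (id : σ → σ)
  exact ⟨t, mem_tailVars.2 fun s _ => ht s⟩

theorem exists_mem_stanleyCone_tailVars {k : ℕ} {b : σ →₀ ℕ} (hb : k ≤ b.degree) :
    ∃ a, a.degree = k ∧ b ∈ stanleyCone a (tailVars a) := by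
  obtain ⟨m, hm⟩ := Nat.exists_eq_add_of_le hb
  induction m generalizing b with
  | zero => exact ⟨b, by omega, 0, by simp, by simp⟩
  | succ m ih =>
    have hne : b.support.Nonempty := by
      rw [Finsupp.support_nonempty_iff]
      rintro rfl
      simp at hm
    set t := b.support.max' hne
    set b' := b - Finsupp.single t 1
    have hb' : b' + Finsupp.single t 1 = b := tsub_add_cancel_of_le <|
      Finsupp.single_le_iff.2 (Nat.one_le_iff_ne_zero.2 (Finsupp.mem_support_iff.1 (max'_mem _ _)))
    have hdeg : b'.degree = k + m := by
      have := congrArg Finsupp.degree hb'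
      rw [map_add, Finsupp.degree_single] at this
      omega
    obtain ⟨a, ha, e, he, hae⟩ := ih (by omega) hdeg
    refine ⟨a, ha, e + Finsupp.single t 1, fun s hs => ?_, by rw [← hb', hae, add_assoc]⟩
    rcases mem_union.1 (Finsupp.support_add hs) with hs | hs
    · exact he hs
    · rw [Finset.mem_singleton.1 (Finsupp.support_single_subset hs)]
      refine mem_tailVars.2 fun s' hs' => le_max' _ _ ?_
      have hab : a ≤ b := by
        rw [← hb', hae, add_assoc]
        exact le_self_add
      exact Finsupp.support_mono hab hs'

theorem not_toLex_lt_of_mem_stanleyCone_tailVars {a a' b : σ →₀ ℕ}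
    (hdeg : a'.degree ≤ a.degree) (hb : b ∈ stanleyCone a (tailVars a)) (hle : a' ≤ b) :
    ¬ toLex a < toLex a' := by
  rintro ⟨i, hlt, hi⟩
  obtain ⟨e, he, rfl⟩ := hb
  have hei : e i ≠ 0 := by
    have := hle i
    simp only [Finsupp.add_apply] at this
    change a i < a' i at hi
    omega
  have ha : ∀ s ∈ a.support, s ≤ i := mem_tailVars.1 (he (Finsupp.mem_support_iff.2 hei))
  refine hdeg.not_gt ?_
  rw [Finsupp.degree_eq_sum, Finsupp.degree_eq_sum]
  refine sum_lt_sum (fun s _ => ?_) ⟨i, mem_univ i, hi⟩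
  rcases lt_trichotomy s i with hs | rfl | hs
  · exact (hlt s hs).le
  · exact hi.le
  · have : a s = 0 := by
      by_contra h
      exact hs.not_ge (ha s (Finsupp.mem_support_iff.2 h))
    rw [this]
    exact Nat.zero_le _

theorem eq_of_mem_stanleyCone_tailVars {a a' b : σ →₀ ℕ} (hdeg : a.degree = a'.degree)
    (h : b ∈ stanleyCone a (tailVars a)) (h' : b ∈ stanleyCone a' (tailVars a')) : a = a' := by
  rcases lt_trichotomy (toLex a) (toLex a') with hlt | heq | hgt
  · exact absurd hlt (not_toLex_lt_of_mem_stanleyCone_tailVars hdeg.ge h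
      (le_of_mem_stanleyCone h'))
  · exact toLex.injective heq
  · exact absurd hgt (not_toLex_lt_of_mem_stanleyCone_tailVars hdeg.le h'
      (le_of_mem_stanleyCone h))

end TailVars

theorem DirectSum.decompose_sum_apply_of_injective {ι α M σ' : Type*} [DecidableEq ι]
    [AddCommMonoid M] [SetLike σ' M] [AddSubmonoidClass σ' M] (ℳ : ι → σ')
    [DirectSum.Decomposition ℳ] {φ : α → ι} (hφ : Injective φ) {y : α → M}
    (hy : ∀ j, y j ∈ ℳ (φ j)) (s : Finset α) {j : α} (hj : j ∈ s) :
    (DirectSum.decompose ℳ (∑ l ∈ s, y l) (φ j) : M) = y j := by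
  rw [DirectSum.decompose_sum, DFinsupp.finsetSum_apply, AddSubmonoidClass.coe_finsetSum,
    sum_eq_single_of_mem j hj fun l _ hl => DirectSum.decompose_of_mem_ne ℳ (hy l) (hφ.ne hl)]
  exact DirectSum.decompose_of_mem_same ℳ (hy j)

theorem StanleyDecomposition.elt_ne_zero {g : MultiGrading K n M} (D : StanleyDecomposition g)
    (i : Fin D.r) : D.elt i ≠ 0 := fun h =>
  one_ne_zero (D.free i 1 (one_mem _) (by rw [h, smul_zero]))

theorem mem_stanleySpace_iff {m x : M} {Z : Finset (Fin n)} :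
    x ∈ stanleySpace (K := K) m Z ↔ ∃ p ∈ supported K (↑Z : Set (Fin n)), p • m = x := by
  simp [stanleySpace]

section StanleySpace

variable {I : Ideal (MvPolynomial (Fin n) K)} {m x : ↥I} {c b : Fin n →₀ ℕ} {ρ : K}
  {Z : Finset (Fin n)}

theorem stanleySpace_le_comap_restrictSupport (hm : (m : S) = monomial c ρ) :
    stanleySpace (K := K) m Z ≤
      (restrictSupport K (stanleyCone c Z)).comap (I.subtype.restrictScalars K) := by
  intro x hx
  obtain ⟨p, hp, rfl⟩ := mem_stanleySpace_iff.1 hx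
  simp only [Submodule.mem_comap, LinearMap.coe_restrictScalars, Submodule.subtype_apply,
    Submodule.coe_smul, smul_eq_mul, hm, mem_restrictSupport_iff]
  intro b hb
  obtain ⟨e, he, c', hc', rfl⟩ := mem_add.1 (support_mul p _ hb)
  rw [Finset.mem_singleton.1 (support_monomial_subset hc')]
  exact ⟨e, fun t ht => Finset.mem_coe.1 <|
    mem_supported.1 hp ((mem_vars_iff_mem_support t).2 ⟨e, he, ht⟩), add_comm _ _⟩

theorem mem_stanleySpace_of_mem_stanleyCone (hm : (m : S) = monomial c ρ) (hρ : ρ ≠ 0)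
    (hb : b ∈ stanleyCone c Z) (hx : (x : S) = monomial b 1) : x ∈ stanleySpace (K := K) m Z := by
  obtain ⟨e, he, rfl⟩ := hb
  refine mem_stanleySpace_iff.2 ⟨monomial e ρ⁻¹, ?_, Subtype.ext ?_⟩
  · rw [mem_supported, vars_monomial (inv_ne_zero hρ)]
    exact_mod_cast he
  · rw [Submodule.coe_smul, smul_eq_mul, hm, hx, monomial_mul, inv_mul_cancel₀ hρ, add_comm]

end StanleySpace

section MaxIdealPow

variable {k : ℕ}

theorem mem_maxIdeal_pow_iff {p : S} : p ∈ maxIdeal K n ^ k ↔ ∀ c ∈ p.support, k ≤ c.degree :=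
  mem_pow_idealOfVars_iff k p

theorem monomial_mem_maxIdeal_pow_iff {c : Fin n →₀ ℕ} {r : K} (hr : r ≠ 0) :
    monomial c r ∈ maxIdeal K n ^ k ↔ k ≤ c.degree :=
  monomial_mem_pow_idealOfVars_iff k c hr

theorem monomial_coeff_mem_maxIdeal_pow {p : S} (hp : p ∈ maxIdeal K n ^ k) (c : Fin n →₀ ℕ) :
    monomial c (coeff c p) ∈ maxIdeal K n ^ k := by
  by_cases h : coeff c p = 0
  · simp [h]
  · exact (monomial_mem_maxIdeal_pow_iff h).2 (mem_maxIdeal_pow_iff.1 hp c (mem_support_iff.2 h))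

noncomputable def monomialTerm (x : ↥(maxIdeal K n ^ k)) (c : Fin n →₀ ℕ) :
    ↥(maxIdeal K n ^ k) :=
  ⟨monomial c (coeff c (x : S)), monomial_coeff_mem_maxIdeal_pow x.2 c⟩

theorem sum_monomialTerm (x : ↥(maxIdeal K n ^ k)) :
    ∑ c ∈ (x : S).support, monomialTerm x c = x :=
  Subtype.ext <| by simp [monomialTerm]

theorem monomialTerm_eq_smul {x : ↥(maxIdeal K n ^ k)} {c : Fin n →₀ ℕ}
    (hc : monomial c (1 : K) ∈ maxIdeal K n ^ k) :
    monomialTerm x c = coeff c (x : S) • ⟨monomial c 1, hc⟩ :=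
  Subtype.ext <| by simp [monomialTerm, smul_monomial]

noncomputable def monomialElem {b : Fin n →₀ ℕ} (hb : k ≤ b.degree) : ↥(maxIdeal K n ^ k) :=
  ⟨monomial b 1, (monomial_mem_maxIdeal_pow_iff one_ne_zero).2 hb⟩

theorem monomialElem_ne_zero {b : Fin n →₀ ℕ} (hb : k ≤ b.degree) :
    monomialElem (K := K) hb ≠ 0 := fun h =>
  one_ne_zero ((monomial_eq_zero (s := b)).1 (congrArg Subtype.val h))

theorem le_degree_of_coe_eq_monomial {x : ↥(maxIdeal K n ^ k)} {c : Fin n →₀ ℕ} {ρ : K}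
    (hρ : ρ ≠ 0) (hx : (x : S) = monomial c ρ) : k ≤ c.degree :=
  (monomial_mem_maxIdeal_pow_iff hρ).1 (hx ▸ x.2)

section Family

variable {ι : Type*} {m : ι → ↥(maxIdeal K n ^ k)} {c : ι → Fin n →₀ ℕ} {ρ : ι → K}
  {Z : ι → Finset (Fin n)}

theorem iSupIndep_stanleySpace_iff (hρ : ∀ i, ρ i ≠ 0)
    (hm : ∀ i, (m i : S) = monomial (c i) (ρ i)) :
    iSupIndep (fun i => stanleySpace (K := K) (m i) (Z i)) ↔
      Pairwise (Disjoint on fun i => stanleyCone (c i) (Z i)) := by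
  constructor
  · refine fun h i j hij => Set.disjoint_left.2 fun b hbi hbj => ?_
    have hb : k ≤ b.degree := (le_degree_of_coe_eq_monomial (hρ i) (hm i)).trans
      (Finsupp.degree_mono (le_of_mem_stanleyCone hbi))
    exact monomialElem_ne_zero hb (Submodule.disjoint_def.1 (h.pairwiseDisjoint hij) _
      (mem_stanleySpace_of_mem_stanleyCone (hm i) (hρ i) hbi rfl)
      (mem_stanleySpace_of_mem_stanleyCone (hm j) (hρ j) hbj rfl))
  · intro hdisj i
    rw [Submodule.disjoint_def]
    intro x hxi hxj
    have hi := stanleySpace_le_comap_restrictSupport (hm i) hxi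
    have hj : x ∈ (restrictSupport K (⋃ j ≠ i, stanleyCone (c j) (Z j))).comap
        ((maxIdeal K n ^ k).subtype.restrictScalars K) := by
      refine iSup₂_le (fun j hji => (stanleySpace_le_comap_restrictSupport (hm j)).trans ?_) hxj
      exact Submodule.comap_mono (restrictSupport_mono K
        (Set.subset_iUnion₂ (s := fun j (_ : j ≠ i) => stanleyCone (c j) (Z j)) j hji))
    simp only [Submodule.mem_comap, LinearMap.coe_restrictScalars, Submodule.subtype_apply,
      mem_restrictSupport_iff] at hi hj
    refine Subtype.ext (support_eq_empty.1 (Finset.eq_empty_of_forall_notMem fun b hb => ?_))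
    obtain ⟨j, hji, hbj⟩ := Set.mem_iUnion₂.1 (hj hb)
    exact Set.disjoint_left.1 (hdisj (Ne.symm hji)) (hi hb) hbj

theorem iSup_stanleySpace_eq_top_iff (hρ : ∀ i, ρ i ≠ 0)
    (hm : ∀ i, (m i : S) = monomial (c i) (ρ i)) :
    ⨆ i, stanleySpace (K := K) (m i) (Z i) = ⊤ ↔
      ∀ b : Fin n →₀ ℕ, k ≤ b.degree → ∃ i, b ∈ stanleyCone (c i) (Z i) := by
  constructor
  · intro h b hb
    have : monomialElem (K := K) hb ∈ (restrictSupport K (⋃ i, stanleyCone (c i) (Z i))).comap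
        ((maxIdeal K n ^ k).subtype.restrictScalars K) := by
      refine iSup_le (fun i => (stanleySpace_le_comap_restrictSupport (hm i)).trans ?_)
        (h ▸ Submodule.mem_top)
      exact Submodule.comap_mono (restrictSupport_mono K
        (Set.subset_iUnion (fun i => stanleyCone (c i) (Z i)) i))
    simp only [Submodule.mem_comap, LinearMap.coe_restrictScalars, Submodule.subtype_apply,
      mem_restrictSupport_iff, monomialElem] at this
    exact Set.mem_iUnion.1 (this (by simp))
  · refine fun hcover => eq_top_iff.2 fun x _ => ?_
    rw [← sum_monomialTerm x]
    refine Submodule.sum_mem _ fun b hb => ?_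
    have hbk := mem_maxIdeal_pow_iff.1 x.2 b hb
    obtain ⟨i, hi⟩ := hcover b hbk
    rw [monomialTerm_eq_smul ((monomial_mem_maxIdeal_pow_iff one_ne_zero).2 hbk)]
    exact Submodule.mem_iSup_of_mem i (Submodule.smul_mem _ _
      (mem_stanleySpace_of_mem_stanleyCone (hm i) (hρ i) hi rfl))

end Family

section Grading

def MultiGrading.MonomialsHomogeneous (g : MultiGrading K n ↥(maxIdeal K n ^ k)) : Prop :=
  ∀ (c : Fin n →₀ ℕ) (hc : monomial c (1 : K) ∈ maxIdeal K n ^ k),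
    (⟨monomial c (1 : K), hc⟩ : ↥(maxIdeal K n ^ k)) ∈ g.deg (fun i => (c i : ℤ))

variable {g : MultiGrading K n ↥(maxIdeal K n ^ k)}

theorem exists_eq_monomial_of_mem_deg (hg : g.MonomialsHomogeneous)
    {x : ↥(maxIdeal K n ^ k)} {a : Fin n → ℤ} (hx : x ∈ g.deg a) (hx0 : x ≠ 0) :
    ∃ c ρ, ρ ≠ 0 ∧ (x : S) = monomial c ρ := by
  classical
  let _ := g.isInternal.chooseDecomposition
  let φ (c : Fin n →₀ ℕ) : Fin n → ℤ := fun i => (c i : ℤ)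
  have hφ : Injective φ := fun c c' h =>
    Finsupp.ext fun i => Nat.cast_injective (R := ℤ) (congrFun h i)
  have hterm (c : Fin n →₀ ℕ) : monomialTerm x c ∈ g.deg (φ c) := by
    by_cases h : coeff c (x : S) = 0
    · rw [show monomialTerm x c = 0 from Subtype.ext (by simp [monomialTerm, h])]
      exact zero_mem _
    · have hc := (monomial_mem_maxIdeal_pow_iff (K := K) one_ne_zero).2
        (mem_maxIdeal_pow_iff.1 x.2 c (mem_support_iff.2 h))
      rw [monomialTerm_eq_smul hc]
      exact Submodule.smul_mem _ _ (hg c hc)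
  have hdeg : ∀ c ∈ (x : S).support, φ c = a := by
    refine fun c hc => by_contra fun hne => mem_support_iff.1 hc ?_
    have := DirectSum.decompose_sum_apply_of_injective g.deg hφ hterm _ hc
    rw [sum_monomialTerm, DirectSum.decompose_of_mem_ne g.deg hx (Ne.symm hne)] at this
    simpa [monomialTerm] using congrArg Subtype.val this.symm
  obtain ⟨c, hc⟩ := support_nonempty.2 fun h => hx0 (Subtype.ext h)
  have hsupp : (x : S).support = {c} := eq_singleton_iff_unique_mem.2
    ⟨hc, fun c' hc' => hφ ((hdeg c' hc').trans (hdeg c hc).symm)⟩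
  refine ⟨c, coeff c (x : S), mem_support_iff.1 hc, ?_⟩
  conv_lhs => rw [← support_sum_monomial_coeff (x : S), hsupp, sum_singleton]

theorem StanleyDecomposition.sdepth_le_of_maxIdeal_pow (hn : 0 < n)
    (hg : g.MonomialsHomogeneous) (D : StanleyDecomposition g) :
    D.sdepth ≤ (((n + k) / (k + 1) : ℕ) : ℕ∞) := by
  have : Nonempty (Fin n) := ⟨⟨0, hn⟩⟩
  choose c ρ hρ hm using fun i =>
    exists_eq_monomial_of_mem_deg hg (D.homogeneous i).choose_spec (D.elt_ne_zero i)
  obtain ⟨hindep, htop⟩ :=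
    (DirectSum.isInternal_submodule_iff_iSupIndep_and_iSup_eq_top _).1 D.isInternal
  obtain ⟨i, hi⟩ := exists_card_mul_le_of_stanleyCone_cover
    (fun i => le_degree_of_coe_eq_monomial (hρ i) (hm i))
    ((iSupIndep_stanleySpace_iff hρ hm).1 hindep) ((iSup_stanleySpace_eq_top_iff hρ hm).1 htop)
  rw [Fintype.card_fin] at hi
  calc D.sdepth ≤ #(D.Z i) := iInf_le _ i
    _ ≤ _ := by exact_mod_cast (Nat.le_div_iff_mul_le k.succ_pos).2 hi

theorem exists_stanleyDecomposition_one_le_sdepth (hn : 0 < n) (hg : g.MonomialsHomogeneous) :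
    ∃ D : StanleyDecomposition g, 1 ≤ D.sdepth := by
  have : Nonempty (Fin n) := ⟨⟨0, hn⟩⟩
  set A := (univ : Finset (Fin n)).finsuppAntidiag k
  let a (i : Fin #A) : Fin n →₀ ℕ := A.equivFin.symm i
  have ha (i : Fin #A) : k ≤ (a i).degree := (mem_finsuppAntidiag_univ.1 (A.equivFin.symm i).2).ge
  have hmem (i : Fin #A) := (monomial_mem_maxIdeal_pow_iff (K := K) one_ne_zero).2 (ha i)
  have hinternal : DirectSum.IsInternal fun i => stanleySpace (K := K)
      (⟨monomial (a i) 1, hmem i⟩ : ↥(maxIdeal K n ^ k)) (tailVars (a i)) := by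
    rw [DirectSum.isInternal_submodule_iff_iSupIndep_and_iSup_eq_top,
      iSupIndep_stanleySpace_iff (fun _ => one_ne_zero) (fun _ => rfl),
      iSup_stanleySpace_eq_top_iff (fun _ => one_ne_zero) (fun _ => rfl)]
    refine ⟨fun i j hij => Set.disjoint_left.2 fun b hi hj => hij ?_, fun b hb => ?_⟩
    · exact A.equivFin.symm.injective (Subtype.ext (eq_of_mem_stanleyCone_tailVars
        (by rw [mem_finsuppAntidiag_univ.1 (A.equivFin.symm i).2,
          mem_finsuppAntidiag_univ.1 (A.equivFin.symm j).2]) hi hj))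
    · obtain ⟨a₀, ha₀, hb⟩ := exists_mem_stanleyCone_tailVars hb
      exact ⟨A.equivFin ⟨a₀, mem_finsuppAntidiag_univ.2 ha₀⟩, by simpa [a] using hb⟩
  refine ⟨⟨#A, fun i => ⟨monomial (a i) 1, hmem i⟩, fun i => tailVars (a i),
    fun i => ⟨_, hg _ (hmem i)⟩, fun i p _ hp => ?_, hinternal⟩, ?_⟩
  · exact (mul_eq_zero.1 (congrArg Subtype.val hp)).resolve_right (by simp)
  · exact le_iInf fun i => by exact_mod_cast card_pos.2 (tailVars_nonempty (a i))

end Grading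

end MaxIdealPow

theorem sdepth_maxIdeal_pow_le_general {K : Type*} [Field K] {n k : ℕ} (hn : 0 < n)
    (g : MultiGrading K n ↥(maxIdeal K n ^ k))
    (hg : ∀ (c : Fin n →₀ ℕ) (hc : monomial c (1 : K) ∈ maxIdeal K n ^ k),
      (⟨monomial c (1 : K), hc⟩ : ↥(maxIdeal K n ^ k)) ∈ g.deg (fun i => (c i : ℤ))) :
    stanleyDepth g ≤ (((n + k) / (k + 1) : ℕ) : ℕ∞) ∧
      (n - 1 ≤ k → stanleyDepth g = 1) := by
  have hupper : stanleyDepth g ≤ (((n + k) / (k + 1) : ℕ) : ℕ∞) :=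
    iSup_le fun D => D.sdepth_le_of_maxIdeal_pow hn hg
  refine ⟨hupper, fun hnk => le_antisymm ?_ ?_⟩
  · rwa [Nat.div_eq_of_lt_le (k := 1) (by omega) (by omega), Nat.cast_one] at hupper
  · obtain ⟨D, hD⟩ := exists_stanleyDecomposition_one_le_sdepth hn hg
    exact hD.trans (le_iSup StanleyDecomposition.sdepth D)

/-- Let `n, k` be positive integers and `a = ⌈n/(k+1)⌉`
(`= (n+k)/(k+1)` with natural division).  Then `sdepth (𝔪^k) ≤ a`, where
`𝔪 = (x₁,…,xₙ) ⊆ K[x₁,…,xₙ]` (with its natural multigrading, in which every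
monomial of `𝔪^k` is homogeneous of its own multidegree).  In particular, if
`k ≥ n - 1` then `sdepth (𝔪^k) = 1`. -/
theorem sdepth_maxIdeal_pow_le {K : Type*} [Field K] {n k : ℕ} (hn : 0 < n) (hk : 0 < k)
    (g : MultiGrading K n ↥(maxIdeal K n ^ k))
    (hg : ∀ (c : Fin n →₀ ℕ) (hc : monomial c (1 : K) ∈ maxIdeal K n ^ k),
      (⟨monomial c (1 : K), hc⟩ : ↥(maxIdeal K n ^ k)) ∈ g.deg (fun i => (c i : ℤ))) :
    stanleyDepth g ≤ (((n + k) / (k + 1) : ℕ) : ℕ∞) ∧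
      (n - 1 ≤ k → stanleyDepth g = 1) :=
  sdepth_maxIdeal_pow_le_general hn g hg
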